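/- The 'number operator' identity: for the normalized Carlitz polynomials f_i, the operators a⁺ = τ - I and a⁻ = d satisfy a⁺f_{i-1} = [i]f_i and a⁻f_i = f_{i-1} for i ≥ 1, and a⁻f_0 = 0; consequently (a⁺a⁻)f_i = [i]f_i for all i ≥ 0. -/

import Mathlib

open Polynomial Finset

/-- The Carlitz bracket `[i] = x^{q^i} - x` in `F_q[x]`. -/
noncomputable def carBr (Fq : Type) [Field Fq] [Fintype Fq] (q i : ℕ) : Polynomial Fq :=
  X ^ q ^ i - X

/-- The Carlitz factorial `D_0 = 1`, `D_i = [i]·D_{i-1}^q`. -/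
noncomputable def carD (Fq : Type) [Field Fq] [Fintype Fq] (q : ℕ) : ℕ → Polynomial Fq
  | 0 => 1
  | i + 1 => carBr Fq q (i + 1) * (carD Fq q i) ^ q

/-- The (non-normalized) Carlitz polynomial `e_i(s) = ∏_{m ∈ F_q[x], deg m < i} (s - m)`,
the product over all `q^i` polynomials of degree `< i` (including `0`); `e_0(s) = s`. -/
noncomputable def carE (Fq : Type) [Field Fq] [Fintype Fq] (i : ℕ) (s : Polynomial Fq) :
    Polynomial Fq :=
  ∏ c : Fin i → Fq, (s - ∑ j : Fin i, Polynomial.C (c j) * X ^ (j : ℕ))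

/-- The normalized Carlitz polynomial `f_i = e_i/D_i`, as an `F_q(x)`-valued function
of `t ∈ F_q[x]`. -/
noncomputable def fC (Fq : Type) [Field Fq] [Fintype Fq] (q i : ℕ) (t : Polynomial Fq) :
    RatFunc Fq :=
  algebraMap (Polynomial Fq) (RatFunc Fq) (carE Fq i t) /
    algebraMap (Polynomial Fq) (RatFunc Fq) (carD Fq q i)

/-- `d f_i`, i.e. `f_{i-1}` for `i ≥ 1` and `0` for `i = 0`. -/
noncomputable def dfC (Fq : Type) [Field Fq] [Fintype Fq] (q i : ℕ) (t : Polynomial Fq) :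
    RatFunc Fq :=
  match i with
  | 0 => 0
  | i + 1 => fC Fq q i t


/-!
The `e_i` are `F_q`-linear, and splitting off the top coefficient gives
`e_{i+1}(s) = ∏_{a ∈ F_q} e_i(s - a x^i) = e_i(s)^q - e_i(x^i)^{q-1} e_i(s)`; linearity and this
recursion are proved together by induction. Substituting
`e_{i+1}(x t) = x e_{i+1}(t) + [i+1] e_i(t)^q` into the recursion, with the Frobenius identity
`[i+2] = [i+1]^q + [1]`, propagates it from `i` to `i+1`; at `t = x^i`, a root of `e_{i+1}`, it
gives `e_i(x^i) = D_i`. Dividing by `D_{i+1} = [i+1] D_i^q` yields the identities for `f_i`.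
-/

section FiniteField

theorem add_pow_card (Fq : Type) [Field Fq] [Fintype Fq] {R : Type*} [CommRing R] [Algebra Fq R]
    (u v : R) : (u + v) ^ Fintype.card Fq = u ^ Fintype.card Fq + v ^ Fintype.card Fq :=
  map_add (FiniteField.frobeniusAlgHom Fq R) u v

theorem sub_pow_card (Fq : Type) [Field Fq] [Fintype Fq] {R : Type*} [CommRing R] [Algebra Fq R]
    (u v : R) : (u - v) ^ Fintype.card Fq = u ^ Fintype.card Fq - v ^ Fintype.card Fq :=
  map_sub (FiniteField.frobeniusAlgHom Fq R) u v

variable {Fq : Type} [Field Fq] [Fintype Fq]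

theorem prod_X_sub_C_eq_X_pow_card_sub_X : ∏ a : Fq, (X - C a) = X ^ Fintype.card Fq - X := by
  have hmonic : (X ^ Fintype.card Fq - X : Fq[X]).Monic :=
    monic_X_pow_sub (by rw [degree_X]; exact_mod_cast Fintype.one_lt_card)
  have hroots := FiniteField.roots_X_pow_card_sub_X Fq
  rw [← prod_multiset_X_sub_C_of_monic_of_roots_card_eq hmonic, hroots, prod_eq_multiset_prod]
  rw [hroots, FiniteField.X_pow_card_sub_X_natDegree_eq Fq Fintype.one_lt_card]
  simp

theorem prod_sub_smul_eq_of_field {K : Type*} [Field K] [Algebra Fq K] (y d : K) :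
    ∏ a : Fq, (y - a • d) = y ^ Fintype.card Fq - d ^ (Fintype.card Fq - 1) * y := by
  rcases eq_or_ne d 0 with rfl | hd
  · simp [(Nat.sub_pos_of_lt Fintype.one_lt_card).ne']
  have hz : ∏ a : Fq, (y / d - algebraMap Fq K a) = (y / d) ^ Fintype.card Fq - y / d := by
    simpa [map_prod] using congrArg (aeval (y / d)) (prod_X_sub_C_eq_X_pow_card_sub_X (Fq := Fq))
  have hfactor : ∀ a : Fq, y - a • d = d * (y / d - algebraMap Fq K a) := by
    intro a
    rw [Algebra.smul_def, mul_sub, mul_div_cancel₀ _ hd, mul_comm]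
  rw [prod_congr rfl fun a _ => hfactor a, prod_mul_distrib, prod_const, card_univ, hz]
  obtain ⟨n, hn⟩ : ∃ n, Fintype.card Fq = n + 1 := Nat.exists_eq_succ_of_ne_zero Fintype.card_ne_zero
  rw [hn, Nat.add_sub_cancel, mul_sub, ← mul_pow, mul_div_cancel₀ _ hd, pow_succ d, mul_assoc,
    mul_div_cancel₀ _ hd]

theorem prod_sub_smul_eq {R : Type*} [CommRing R] [IsDomain R] [Algebra Fq R] (y d : R) :
    ∏ a : Fq, (y - a • d) = y ^ Fintype.card Fq - d ^ (Fintype.card Fq - 1) * y := by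
  apply IsFractionRing.injective R (FractionRing R)
  have := prod_sub_smul_eq_of_field (Fq := Fq) (algebraMap R (FractionRing R) y)
    (algebraMap R (FractionRing R) d)
  simpa [map_prod, Algebra.smul_def, IsScalarTower.algebraMap_apply Fq R (FractionRing R)] using this

end FiniteField

section Carlitz

variable {Fq : Type} [Field Fq] [Fintype Fq]

theorem carE_zero (s : Fq[X]) : carE Fq 0 s = s := by
  simp [carE]

theorem carE_succ_eq_prod (i : ℕ) (s : Fq[X]) :
    carE Fq (i + 1) s = ∏ a : Fq, carE Fq i (s - a • X ^ i) := by
  rw [carE, ← (Fin.snocEquiv fun _ => Fq).prod_comp, Fintype.prod_prod_type]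
  refine prod_congr rfl fun a _ => prod_congr rfl fun c _ => ?_
  simp only [Fin.sum_univ_castSucc, Fin.snocEquiv_apply, Fin.snoc_castSucc, Fin.snoc_last,
    Fin.val_castSucc, Fin.val_last, smul_eq_C_mul]
  ring

theorem carE_succ_of_isLinearMap (i : ℕ) (hlin : IsLinearMap Fq (carE Fq i)) (s : Fq[X]) :
    carE Fq (i + 1) s =
      carE Fq i s ^ Fintype.card Fq - carE Fq i (X ^ i) ^ (Fintype.card Fq - 1) * carE Fq i s := by
  simp only [carE_succ_eq_prod, hlin.map_sub, hlin.map_smul]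
  exact prod_sub_smul_eq _ _

theorem isLinearMap_carE (i : ℕ) : IsLinearMap Fq (carE Fq i) := by
  induction i with
  | zero => exact ⟨fun s t => by simp only [carE_zero], fun a s => by simp only [carE_zero]⟩
  | succ i ih =>
    have hsucc := carE_succ_of_isLinearMap i ih
    constructor
    · intro s t
      simp only [hsucc, ih.map_add, add_pow_card Fq]
      ring
    · intro a s
      simp only [hsucc, ih.map_smul, smul_sub, mul_smul_comm, _root_.smul_pow, FiniteField.pow_card]

theorem carE_succ (i : ℕ) (s : Fq[X]) :
    carE Fq (i + 1) s =
      carE Fq i s ^ Fintype.card Fq - carE Fq i (X ^ i) ^ (Fintype.card Fq - 1) * carE Fq i s :=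
  carE_succ_of_isLinearMap i (isLinearMap_carE i) s

theorem carE_succ_X_pow_self (i : ℕ) : carE Fq (i + 1) (X ^ i) = 0 := by
  rw [carE_succ, ← pow_succ, Nat.sub_add_cancel Fintype.card_pos, sub_self]

theorem carBr_succ (i : ℕ) :
    carBr Fq (Fintype.card Fq) (i + 1) =
      carBr Fq (Fintype.card Fq) i ^ Fintype.card Fq + (X ^ Fintype.card Fq - X) := by
  rw [carBr, carBr, sub_pow_card Fq, ← pow_mul, ← pow_succ]
  ring

theorem carE_succ_X_pow_succ_of_X_mul (i : ℕ)
    (h : ∀ t : Fq[X], carE Fq (i + 1) (X * t) =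
      X * carE Fq (i + 1) t + carBr Fq (Fintype.card Fq) (i + 1) * carE Fq i t ^ Fintype.card Fq) :
    carE Fq (i + 1) (X ^ (i + 1)) =
      carBr Fq (Fintype.card Fq) (i + 1) * carE Fq i (X ^ i) ^ Fintype.card Fq := by
  rw [pow_succ', h, carE_succ_X_pow_self, mul_zero, zero_add]

theorem carE_succ_X_mul (i : ℕ) (t : Fq[X]) :
    carE Fq (i + 1) (X * t) =
      X * carE Fq (i + 1) t + carBr Fq (Fintype.card Fq) (i + 1) * carE Fq i t ^ Fintype.card Fq := by
  induction i generalizing t with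
  | zero =>
    simp only [carE_succ, carE_zero, pow_zero, one_pow, one_mul, carBr, zero_add, pow_one, mul_pow]
    ring
  | succ i ih =>
    have hE := carE_succ_X_pow_succ_of_X_mul i ih
    have hB := congrArg (· ^ Fintype.card Fq) (carE_succ i t)
    simp only [sub_pow_card Fq, mul_pow] at hB
    rw [carE_succ (i + 1), carE_succ (i + 1) t, ih, hE, add_pow_card Fq, mul_pow, mul_pow,
      carBr_succ (i + 1)]
    generalize carE Fq i t = A, carE Fq (i + 1) t = B, carE Fq i (X ^ i) = E,
      carBr Fq (Fintype.card Fq) (i + 1) = b at hB ⊢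
    obtain ⟨n, hn⟩ : ∃ n, Fintype.card Fq = n + 1 :=
      Nat.exists_eq_succ_of_ne_zero Fintype.card_ne_zero
    rw [hn, Nat.add_sub_cancel] at hB ⊢
    -- the `E`-terms cancel because `(b * E ^ q) ^ (q - 1) * b = b ^ q * (E ^ (q - 1)) ^ q`
    linear_combination (-b ^ (n + 1)) * hB

theorem carE_X_pow_self (i : ℕ) : carE Fq i (X ^ i) = carD Fq (Fintype.card Fq) i := by
  induction i with
  | zero => simp [carE_zero, carD]
  | succ i ih => rw [carE_succ_X_pow_succ_of_X_mul i (carE_succ_X_mul i), ih, carD]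

theorem carE_succ_eq_carD (i : ℕ) (s : Fq[X]) :
    carE Fq (i + 1) s = carE Fq i s ^ Fintype.card Fq -
      carD Fq (Fintype.card Fq) i ^ (Fintype.card Fq - 1) * carE Fq i s := by
  rw [carE_succ, carE_X_pow_self]

theorem carBr_ne_zero {i : ℕ} (hi : i ≠ 0) : carBr Fq (Fintype.card Fq) i ≠ 0 :=
  FiniteField.X_pow_card_pow_sub_X_ne_zero Fq hi Fintype.one_lt_card

theorem carD_ne_zero (i : ℕ) : carD Fq (Fintype.card Fq) i ≠ 0 := by
  induction i with
  | zero => exact one_ne_zero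
  | succ i ih => exact mul_ne_zero (carBr_ne_zero (Nat.add_one_ne_zero i)) (pow_ne_zero _ ih)

theorem fC_zero_X_mul_sub (t : Fq[X]) :
    fC Fq (Fintype.card Fq) 0 (X * t) -
      algebraMap Fq[X] (RatFunc Fq) X * fC Fq (Fintype.card Fq) 0 t = 0 := by
  simp [fC, carE_zero, carD]

theorem fC_succ_X_mul_sub (i : ℕ) (t : Fq[X]) :
    fC Fq (Fintype.card Fq) (i + 1) (X * t) -
      algebraMap Fq[X] (RatFunc Fq) X * fC Fq (Fintype.card Fq) (i + 1) t =
        fC Fq (Fintype.card Fq) i t ^ Fintype.card Fq := by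
  have hb := RatFunc.algebraMap_ne_zero (carBr_ne_zero (Fq := Fq) (Nat.add_one_ne_zero i))
  have hD := RatFunc.algebraMap_ne_zero (carD_ne_zero (Fq := Fq) i)
  simp only [fC, carE_succ_X_mul, carD, map_add, map_mul, map_pow, div_pow]
  generalize algebraMap Fq[X] (RatFunc Fq) (carD Fq (Fintype.card Fq) i) = D at hD ⊢
  generalize algebraMap Fq[X] (RatFunc Fq) (carBr Fq (Fintype.card Fq) (i + 1)) = b at hb ⊢
  field_simp
  ring

theorem fC_pow_card_sub_self (i : ℕ) (t : Fq[X]) :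
    fC Fq (Fintype.card Fq) i t ^ Fintype.card Fq - fC Fq (Fintype.card Fq) i t =
      algebraMap Fq[X] (RatFunc Fq) (carBr Fq (Fintype.card Fq) (i + 1)) *
        fC Fq (Fintype.card Fq) (i + 1) t := by
  have hb := RatFunc.algebraMap_ne_zero (carBr_ne_zero (Fq := Fq) (Nat.add_one_ne_zero i))
  have hD := RatFunc.algebraMap_ne_zero (carD_ne_zero (Fq := Fq) i)
  obtain ⟨n, hn⟩ : ∃ n, Fintype.card Fq = n + 1 :=
    Nat.exists_eq_succ_of_ne_zero Fintype.card_ne_zero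
  simp only [fC, carE_succ_eq_carD, carD, map_sub, map_mul, map_pow, div_pow]
  generalize algebraMap Fq[X] (RatFunc Fq) (carD Fq (Fintype.card Fq) i) = D at hD ⊢
  generalize algebraMap Fq[X] (RatFunc Fq) (carBr Fq (Fintype.card Fq) (i + 1)) = b at hb ⊢
  rw [hn, Nat.add_sub_cancel]
  field_simp
  ring

end Carlitz

/-- The creation/annihilation operator identities for the normalized Carlitz polynomials
`f_i`:  `a⁻ f_i = d f_i = f_{i-1}` for `i ≥ 1` (i.e. `f_i(xt) - x·f_i(t) = f_{i-1}(t)^q`,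
the `q`-th power form of `(d f_i)(t) = f_{i-1}(t)`), `a⁻ f_0 = d f_0 = 0`,
`a⁺ f_{i-1} = (τ - I) f_{i-1} = [i] f_i` (i.e. `f_{i-1}^q - f_{i-1} = [i] f_i`), and
consequently the number operator identity `(a⁺ a⁻) f_i = [i] f_i` for all `i ≥ 0`
(with `[0] = x^{q^0} - x = 0`). -/
theorem carlitz_creation_annihilation (Fq : Type) [Field Fq] [Fintype Fq]
    (q : ℕ) (hq : q = Fintype.card Fq) :
    (∀ i : ℕ, 1 ≤ i → ∀ t : Polynomial Fq,
      fC Fq q i (X * t) -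
          algebraMap (Polynomial Fq) (RatFunc Fq) X * fC Fq q i t =
        fC Fq q (i - 1) t ^ q) ∧
    (∀ t : Polynomial Fq,
      fC Fq q 0 (X * t) -
          algebraMap (Polynomial Fq) (RatFunc Fq) X * fC Fq q 0 t = 0) ∧
    (∀ i : ℕ, 1 ≤ i → ∀ t : Polynomial Fq,
      fC Fq q (i - 1) t ^ q - fC Fq q (i - 1) t =
        algebraMap (Polynomial Fq) (RatFunc Fq) (carBr Fq q i) * fC Fq q i t) ∧
    (∀ (i : ℕ) (t : Polynomial Fq),
      dfC Fq q i t ^ q - dfC Fq q i t =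
        algebraMap (Polynomial Fq) (RatFunc Fq) (carBr Fq q i) * fC Fq q i t) := by
  subst hq
  refine ⟨?_, fC_zero_X_mul_sub, ?_, ?_⟩
  · rintro (_ | i) hi t
    · omega
    · exact fC_succ_X_mul_sub i t
  · rintro (_ | i) hi t
    · omega
    · exact fC_pow_card_sub_self i t
  · rintro (_ | i) t
    · simp [dfC, carBr, Fintype.card_ne_zero]
    · exact fC_pow_card_sub_self i t
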